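/- arXiv:0910.4959 — 4 statements merged into one kernel-verified Lean document; each statement's English description precedes it below -/
import Mathlib

section
/- Let (Ω, F, (F_t)_{t≥0}, P) be a filtered probability space. Let N denote the family of its N-negligible sets, let F̃ be the σ-algebra generated by F and N, and for each t ≥ 0 let F̃_t be the σ-algebra generated by F_{t+} := ⋂_{u>t} F_u and N. Then: (i) there exists a unique probability measure P̃ on (Ω, F̃) that coincides with P on F; (ii) the filtered probability space (Ω, F̃, (F̃_t)_{t≥0}, P̃) satisfies the N-usual conditions; (iii) it is the smallest such extension: if (Ω, F', (F'_t)_{t≥0}, P') satisfies the N-usual conditions, F' ⊇ F, F'_t ⊇ F_t for all t ≥ 0, and P' extends P, then F' ⊇ F̃, F'_t ⊇ F̃_t for all t ≥ 0, and P' extends P̃. -/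
open MeasureTheory Set Filter
open scoped NNReal ENNReal

variable {Ω : Type*}

/-- A set `A` is N-negligible with respect to the filtration `𝓕` and the set function `P`
(the outer-measure attached to a probability measure): it is covered by countably many
sets `B n` with `B n ∈ 𝓕 n` and `P (B n) = 0`. -/
def NNegligible (𝓕 : ℝ≥0 → MeasurableSpace Ω) (P : Set Ω → ℝ≥0∞) (A : Set Ω) : Prop :=
  ∃ B : ℕ → Set Ω, (∀ n : ℕ, MeasurableSet[𝓕 (n : ℝ≥0)] (B n)) ∧
    (∀ n : ℕ, P (B n) = 0) ∧ A ⊆ ⋃ n, B n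

/-!
The N-negligible sets form a σ-ideal, so their complements form a filter `L` with the countable
intersection property, and `σ(G ∪ N)` is then exactly the family of sets that are `L`-a.e. equal to
a `G`-measurable set. Everything follows from this description. A measure extending `P` gives such
a set `S` the mass `P S'` of any approximant `S'`, which yields uniqueness and the minimality of
`P̃`; `P̃` itself is Carathéodory's extension of `P`, for null sets are Carathéodory measurable.
A `P̃`-null set of `F̃ₜ` is a.e. equal to a `P`-null set of `F_{t+} ≤ Fₙ` (`n > t`), hence is
negligible. For right-continuity, the `limsup` of approximants of `S` taken at times decreasing
to `t` is `F_{t+}`-measurable and still a.e. equal to `S`.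
-/

namespace NNegligible

variable {𝓕 𝓕' : ℝ≥0 → MeasurableSpace Ω} {A A' : Set Ω}

theorem mono {P : Set Ω → ℝ≥0∞} (hA : NNegligible 𝓕 P A) (h : A' ⊆ A) : NNegligible 𝓕 P A' :=
  let ⟨B, hBm, hB0, hAB⟩ := hA
  ⟨B, hBm, hB0, h.trans hAB⟩

variable {M : Type*} [FunLike M (Set Ω) ℝ≥0∞] [OuterMeasureClass M Ω] {μ : M}

theorem iUnion {ι : Sort*} [Countable ι] {A : ι → Set Ω} (h : ∀ i, NNegligible 𝓕 μ (A i)) :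
    NNegligible 𝓕 μ (⋃ i, A i) := by
  choose B hBm hB0 hAB using h
  refine ⟨fun n => ⋃ i, B i n, fun n => .iUnion fun i => hBm i n,
    fun n => measure_iUnion_null fun i => hB0 i n, iUnion_subset fun i => (hAB i).trans ?_⟩
  exact iUnion_mono fun n => subset_iUnion (fun i => B i n) i

theorem of_measurableSet (n : ℕ) (hA : MeasurableSet[𝓕 n] A) (hA0 : μ A = 0) :
    NNegligible 𝓕 μ A := by
  refine ⟨fun k => ⋃ (_ : k = n), A, fun k => .iUnion fun hk => hk ▸ hA,
    fun k => measure_iUnion_null fun _ => hA0, ?_⟩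
  exact subset_iUnion₂ (s := fun k (_ : k = n) => A) n rfl

theorem measure_eq_zero (hA : NNegligible 𝓕 μ A) : μ A = 0 :=
  let ⟨_, _, hB0, hAB⟩ := hA
  measure_mono_null hAB (measure_iUnion_null hB0)

theorem of_extension {F : MeasurableSpace Ω} {P Q : Set Ω → ℝ≥0∞} (h𝓕 : ∀ t, 𝓕 t ≤ 𝓕' t)
    (h_le : ∀ t, 𝓕 t ≤ F) (hQ : ∀ A, MeasurableSet[F] A → Q A = P A)
    (hA : NNegligible 𝓕 P A) : NNegligible 𝓕' Q A :=
  let ⟨B, hBm, hB0, hAB⟩ := hA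
  ⟨B, fun n => h𝓕 _ _ (hBm n), fun n => (hQ _ (h_le _ _ (hBm n))).trans (hB0 n), hAB⟩

end NNegligible

section NegligibleFilter

variable {M : Type*} [FunLike M (Set Ω) ℝ≥0∞] [OuterMeasureClass M Ω]

def negligibleFilter (𝓕 : ℝ≥0 → MeasurableSpace Ω) (μ : M) : Filter Ω :=
  .ofCountableUnion {A | NNegligible 𝓕 μ A}
    (fun S hS h => by
      have := hS.to_subtype
      exact sUnion_eq_iUnion ▸ NNegligible.iUnion fun s : S => h s s.2)
    (fun _ hA _ h => NNegligible.mono hA h)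

instance (𝓕 : ℝ≥0 → MeasurableSpace Ω) (μ : M) : CountableInterFilter (negligibleFilter 𝓕 μ) :=
  Filter.countableInter_ofCountableUnion ..

theorem nnegligible_iff_eventuallyEq_empty {𝓕 : ℝ≥0 → MeasurableSpace Ω} {μ : M} {A : Set Ω} :
    NNegligible 𝓕 μ A ↔ A =ᶠ[negligibleFilter 𝓕 μ] (∅ : Set Ω) := by
  rw [eventuallyEq_empty]
  change _ ↔ NNegligible 𝓕 μ Aᶜᶜ
  rw [compl_compl]

end NegligibleFilter

namespace MeasurableSpace

abbrev augment (G : MeasurableSpace Ω) (L : Filter Ω) : MeasurableSpace Ω :=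
  generateFrom ({A | MeasurableSet[G] A} ∪ {A | A =ᶠ[L] (∅ : Set Ω)})

variable {G G' m : MeasurableSpace Ω} {L : Filter Ω} {S : Set Ω}

theorem le_augment : G ≤ augment G L :=
  fun _ hA => measurableSet_generateFrom (Or.inl hA)

theorem measurableSet_augment_of_eventuallyEq_empty (h : S =ᶠ[L] (∅ : Set Ω)) :
    MeasurableSet[augment G L] S :=
  measurableSet_generateFrom (Or.inr h)

theorem augment_le (hG : G ≤ m) (hL : ∀ A, A =ᶠ[L] (∅ : Set Ω) → MeasurableSet[m] A) :
    augment G L ≤ m :=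
  generateFrom_le fun A hA => hA.elim (hG A) (hL A)

theorem augment_mono (h : G ≤ G') : augment G L ≤ augment G' L :=
  generateFrom_mono (union_subset_union_left _ h)

theorem measurableSet_augment_iff [CountableInterFilter L] :
    MeasurableSet[augment G L] S ↔ ∃ S', MeasurableSet[G] S' ∧ S =ᶠ[L] S' := by
  refine ⟨fun hS => ?_, fun ⟨S', hS', h⟩ => ?_⟩
  · induction S, hS using generateFrom_induction with
    | hC A hA _ => exact hA.elim (fun hA => ⟨A, hA, .rfl⟩) (fun hA => ⟨∅, .empty, hA⟩)
    | empty => exact ⟨∅, .empty, .rfl⟩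
    | compl A _ ih =>
      obtain ⟨A', hA', h⟩ := ih
      exact ⟨A'ᶜ, hA'.compl, h.compl⟩
    | iUnion A _ ih =>
      choose A' hA' h using ih
      exact ⟨⋃ n, A' n, .iUnion hA', Filter.EventuallyEq.countable_iUnion h⟩
  · have hΔ : (symmDiff S' S : Set Ω) =ᶠ[L] (∅ : Set Ω) := by
      rw [eventuallyEq_empty]
      filter_upwards [eventuallyEq_set.1 h] with x hx
      simp [mem_symmDiff, hx]
    rw [← symmDiff_symmDiff_cancel_left S' S]
    exact (le_augment _ hS').symmDiff (measurableSet_augment_of_eventuallyEq_empty hΔ)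

end MeasurableSpace

open MeasurableSpace

theorem limsup_eventuallyEq_of_forall {L : Filter Ω} [CountableInterFilter L] {s : ℕ → Set Ω}
    {S : Set Ω} (h : ∀ n, s n =ᶠ[L] S) : (limsup s atTop : Set Ω) =ᶠ[L] S := by
  refine eventuallyEq_set.2 ?_
  filter_upwards [eventually_countable_forall.2 fun n => eventuallyEq_set.1 (h n)] with x hx
  simp only [mem_limsup_iff_frequently_mem, hx, frequently_const]

theorem measurableSet_limsup_of_eventually {m : MeasurableSpace Ω} {s : ℕ → Set Ω}
    (h : ∀ᶠ n in atTop, MeasurableSet[m] (s n)) : MeasurableSet[m] (limsup s atTop) := by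
  obtain ⟨N, hN⟩ := eventually_atTop.1 h
  rw [← limsup_nat_add s N]
  exact @MeasurableSet.measurableSet_limsup _ m _ fun n => hN _ (Nat.le_add_left N n)

theorem biInf_Ioi_augment_le_augment {ι : Type*} [LinearOrder ι] [TopologicalSpace ι]
    [OrderTopology ι] [DenselyOrdered ι] [NoMaxOrder ι] [FirstCountableTopology ι]
    (G : ι → MeasurableSpace Ω) (L : Filter Ω) [CountableInterFilter L] (t : ι) :
    ⨅ u ∈ Ioi t, augment (⨅ v ∈ Ioi u, G v) L ≤ augment (⨅ u ∈ Ioi t, G u) L := by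
  intro S hS
  obtain ⟨u, -, hut, hu⟩ := exists_seq_strictAnti_tendsto t
  have happrox n : ∃ S', MeasurableSet[⨅ v ∈ Ioi (u n), G v] S' ∧ S =ᶠ[L] S' :=
    measurableSet_augment_iff.1 (iInf₂_le (f := fun u _ => augment (⨅ v ∈ Ioi u, G v) L)
      (u n) (hut n) S hS)
  choose s hs hSs using happrox
  refine measurableSet_augment_iff.2
    ⟨limsup s atTop, ?_, (limsup_eventuallyEq_of_forall fun n => (hSs n).symm).symm⟩
  simp only [measurableSet_iInf]
  intro v hv
  refine measurableSet_limsup_of_eventually ?_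
  filter_upwards [hu.eventually_lt_const hv] with n hn
  exact (iInf₂_le (f := fun v _ => G v) v hn) _ (hs n)

theorem MeasureTheory.OuterMeasure.isCaratheodory_of_null {m : OuterMeasure Ω} {s : Set Ω}
    (hs : m s = 0) : m.IsCaratheodory s :=
  (m.isCaratheodory_iff_le' (s := s)).2 fun t => by
    rw [measure_mono_null inter_subset_right hs, zero_add]
    exact measure_mono sdiff_subset

section Extension

variable {F : MeasurableSpace Ω} {𝓕 : ℝ≥0 → MeasurableSpace Ω} {P : Measure[F] Ω}
  {M : MeasurableSpace Ω} {Q : Measure[M] Ω}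

theorem exists_measure_augment_negligibleFilter_extends (P : Measure[F] Ω) :
    ∃ Q : Measure[augment F (negligibleFilter 𝓕 P)] Ω, ∀ A, MeasurableSet[F] A → Q A = P A := by
  have hcar : augment F (negligibleFilter 𝓕 P) ≤ P.toOuterMeasure.caratheodory :=
    augment_le (le_toOuterMeasure_caratheodory P) fun A hA =>
      OuterMeasure.isCaratheodory_of_null (nnegligible_iff_eventuallyEq_empty.2 hA).measure_eq_zero
  exact ⟨@OuterMeasure.toMeasure Ω (augment F _) P.toOuterMeasure hcar,
    fun A hA => @toMeasure_apply Ω (augment F _) _ hcar A (le_augment A hA)⟩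

theorem ae_le_negligibleFilter (h_le : ∀ t, 𝓕 t ≤ F) (hQ : ∀ A, MeasurableSet[F] A → Q A = P A) :
    ae Q ≤ negligibleFilter 𝓕 P := fun _ hs =>
  mem_ae_iff.2 (NNegligible.of_extension (P := P) (fun _ => le_rfl) h_le hQ hs).measure_eq_zero

theorem measure_eq_of_eventuallyEq (h_le : ∀ t, 𝓕 t ≤ F)
    (hQ : ∀ A, MeasurableSet[F] A → Q A = P A) {S S' : Set Ω} (hS' : MeasurableSet[F] S')
    (h : S =ᶠ[negligibleFilter 𝓕 P] S') : Q S = P S' :=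
  (measure_congr (h.filter_mono (ae_le_negligibleFilter h_le hQ))).trans (hQ S' hS')

theorem measure_eq_of_measurableSet_augment (h_le : ∀ t, 𝓕 t ≤ F)
    (hQ : ∀ A, MeasurableSet[F] A → Q A = P A) {M' : MeasurableSpace Ω} {R : Measure[M'] Ω}
    (hR : ∀ A, MeasurableSet[F] A → R A = P A) {S : Set Ω}
    (hS : MeasurableSet[augment F (negligibleFilter 𝓕 P)] S) : Q S = R S :=
  let ⟨_, hS', h⟩ := measurableSet_augment_iff.1 hS
  (measure_eq_of_eventuallyEq h_le hQ hS' h).trans (measure_eq_of_eventuallyEq h_le hR hS' h).symm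

theorem nnegligible_of_measurableSet_augment_of_null (h_le : ∀ t, 𝓕 t ≤ F)
    (hQ : ∀ A, MeasurableSet[F] A → Q A = P A) {t : ℝ≥0} {S : Set Ω}
    (hS : MeasurableSet[augment (⨅ u ∈ Ioi t, 𝓕 u) (negligibleFilter 𝓕 P)] S) (hS0 : Q S = 0) :
    NNegligible 𝓕 P S := by
  obtain ⟨S', hS', h⟩ := measurableSet_augment_iff.1 hS
  obtain ⟨n, hn⟩ := exists_nat_gt t
  have hS'n : MeasurableSet[𝓕 n] S' := iInf₂_le (f := fun u _ => 𝓕 u) (n : ℝ≥0) hn S' hS'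
  have hS'0 : P S' = 0 := (measure_eq_of_eventuallyEq h_le hQ (h_le n S' hS'n) h).symm.trans hS0
  exact nnegligible_iff_eventuallyEq_empty.2
    (h.trans (nnegligible_iff_eventuallyEq_empty.1 (.of_measurableSet n hS'n hS'0)))

end Extension

theorem n_augmentation_general
    (F : MeasurableSpace Ω) (𝓕 : ℝ≥0 → MeasurableSpace Ω)
    (h_le : ∀ t, 𝓕 t ≤ F)
    (P : @Measure Ω F)
    (𝓝neg : Set (Set Ω)) (h𝓝 : 𝓝neg = {A | NNegligible 𝓕 (fun s => P s) A})
    (Ftil : MeasurableSpace Ω)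
    (hFtil : Ftil = MeasurableSpace.generateFrom ({A | MeasurableSet[F] A} ∪ 𝓝neg))
    (𝓕til : ℝ≥0 → MeasurableSpace Ω)
    (h𝓕til : ∀ t : ℝ≥0, 𝓕til t =
      MeasurableSpace.generateFrom
        ({A | MeasurableSet[⨅ u ∈ Set.Ioi t, 𝓕 u] A} ∪ 𝓝neg)) :
    -- (i) existence and uniqueness of the extension of `P` to `F̃`
    (∃! Ptil : @Measure Ω Ftil, ∀ A : Set Ω, MeasurableSet[F] A → Ptil A = P A) ∧
    ∀ Ptil : @Measure Ω Ftil, (∀ A : Set Ω, MeasurableSet[F] A → Ptil A = P A) →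
      -- (ii) the N-augmentation satisfies the N-usual conditions
      (((∀ A : Set Ω, NNegligible 𝓕til (fun s => Ptil s) A → MeasurableSet[𝓕til 0] A) ∧
        ∀ t : ℝ≥0, 𝓕til t = ⨅ u ∈ Set.Ioi t, 𝓕til u) ∧
      -- (iii) minimality among all extensions satisfying the N-usual conditions
      ∀ (F' : MeasurableSpace Ω) (𝓕' : ℝ≥0 → MeasurableSpace Ω) (P' : @Measure Ω F'),
        Monotone 𝓕' → (∀ t, 𝓕' t ≤ F') →
        (∀ A : Set Ω, NNegligible 𝓕' (fun s => P' s) A → MeasurableSet[𝓕' 0] A) →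
        (∀ t : ℝ≥0, 𝓕' t = ⨅ u ∈ Set.Ioi t, 𝓕' u) →
        F ≤ F' → (∀ t, 𝓕 t ≤ 𝓕' t) →
        (∀ A : Set Ω, MeasurableSet[F] A → P' A = P A) →
        Ftil ≤ F' ∧ (∀ t, 𝓕til t ≤ 𝓕' t) ∧
          ∀ A : Set Ω, MeasurableSet[Ftil] A → P' A = Ptil A) := by
  set L := negligibleFilter 𝓕 P
  obtain rfl : 𝓝neg = {A | A =ᶠ[L] (∅ : Set Ω)} :=
    h𝓝.trans (Set.ext fun _ => nnegligible_iff_eventuallyEq_empty)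
  obtain rfl : Ftil = augment F L := hFtil
  obtain rfl : 𝓕til = fun t => augment (⨅ u ∈ Ioi t, 𝓕 u) L := funext h𝓕til
  obtain ⟨P₀, hP₀⟩ := exists_measure_augment_negligibleFilter_extends (𝓕 := 𝓕) P
  refine ⟨⟨P₀, hP₀, fun Q hQ => @Measure.ext Ω (augment F L) _ _ fun S hS =>
    measure_eq_of_measurableSet_augment h_le hQ hP₀ hS⟩, fun Ptil hPtil => ⟨⟨?_, fun t => ?_⟩, ?_⟩⟩
  · rintro A ⟨B, hB, hB0, hAB⟩
    have hBneg n : NNegligible 𝓕 P (B n) :=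
      nnegligible_of_measurableSet_augment_of_null h_le hPtil (hB n) (hB0 n)
    exact measurableSet_augment_of_eventuallyEq_empty
      (nnegligible_iff_eventuallyEq_empty.1 ((NNegligible.iUnion hBneg).mono hAB))
  · refine le_antisymm (le_iInf₂ fun u hu => augment_mono ?_)
      (biInf_Ioi_augment_le_augment 𝓕 L t)
    exact biInf_mono fun v (hv : u < v) => show t < v from lt_trans hu hv
  · intro F' 𝓕' P' h'mono h'le h'comp h'rc hFF' h𝓕𝓕' hP'P
    have hnull A (hA : A =ᶠ[L] (∅ : Set Ω)) : MeasurableSet[𝓕' 0] A :=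
      h'comp A ((nnegligible_iff_eventuallyEq_empty.2 hA).of_extension h𝓕𝓕' h_le hP'P)
    refine ⟨augment_le hFF' fun A hA => h'le 0 A (hnull A hA),
      fun t => augment_le ?_ fun A hA => h'mono (zero_le : 0 ≤ t) A (hnull A hA),
      fun A hA => measure_eq_of_measurableSet_augment h_le hP'P hPtil hA⟩
    rw [h'rc t]
    exact iInf₂_mono fun u _ => h𝓕𝓕' u

/-- The N-augmentation of a filtered probability space: existence and uniqueness of the
extension `P̃` of `P` to `F̃ = σ(F ∪ 𝓝)`, the fact that
`(Ω, F̃, (F̃ₜ)ₜ, P̃)` satisfies the N-usual conditions, and its minimality among all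
extensions satisfying the N-usual conditions. -/
theorem n_augmentation
    (F : MeasurableSpace Ω) (𝓕 : ℝ≥0 → MeasurableSpace Ω)
    (h_mono : Monotone 𝓕) (h_le : ∀ t, 𝓕 t ≤ F)
    (P : @Measure Ω F) (hP : @IsProbabilityMeasure Ω F P)
    (𝓝neg : Set (Set Ω)) (h𝓝 : 𝓝neg = {A | NNegligible 𝓕 (fun s => P s) A})
    (Ftil : MeasurableSpace Ω)
    (hFtil : Ftil = MeasurableSpace.generateFrom ({A | MeasurableSet[F] A} ∪ 𝓝neg))
    (𝓕til : ℝ≥0 → MeasurableSpace Ω)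
    (h𝓕til : ∀ t : ℝ≥0, 𝓕til t =
      MeasurableSpace.generateFrom
        ({A | MeasurableSet[⨅ u ∈ Set.Ioi t, 𝓕 u] A} ∪ 𝓝neg)) :
    -- (i) existence and uniqueness of the extension of `P` to `F̃`
    (∃! Ptil : @Measure Ω Ftil, ∀ A : Set Ω, MeasurableSet[F] A → Ptil A = P A) ∧
    ∀ Ptil : @Measure Ω Ftil, (∀ A : Set Ω, MeasurableSet[F] A → Ptil A = P A) →
      -- (ii) the N-augmentation satisfies the N-usual conditions
      (((∀ A : Set Ω, NNegligible 𝓕til (fun s => Ptil s) A → MeasurableSet[𝓕til 0] A) ∧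
        ∀ t : ℝ≥0, 𝓕til t = ⨅ u ∈ Set.Ioi t, 𝓕til u) ∧
      -- (iii) minimality among all extensions satisfying the N-usual conditions
      ∀ (F' : MeasurableSpace Ω) (𝓕' : ℝ≥0 → MeasurableSpace Ω) (P' : @Measure Ω F'),
        Monotone 𝓕' → (∀ t, 𝓕' t ≤ F') →
        (∀ A : Set Ω, NNegligible 𝓕' (fun s => P' s) A → MeasurableSet[𝓕' 0] A) →
        (∀ t : ℝ≥0, 𝓕' t = ⨅ u ∈ Set.Ioi t, 𝓕' u) →
        F ≤ F' → (∀ t, 𝓕 t ≤ 𝓕' t) →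
        (∀ A : Set Ω, MeasurableSet[F] A → P' A = P A) →
        Ftil ≤ F' ∧ (∀ t, 𝓕til t ≤ 𝓕' t) ∧
          ∀ A : Set Ω, MeasurableSet[Ftil] A → P' A = Ptil A) :=
  n_augmentation_general F 𝓕 h_le P 𝓝neg h𝓝 Ftil hFtil 𝓕til h𝓕til
end

section
/- Let A > 0 and let f be a real-valued function defined on a dense subset D of [0, A] containing A. Then f can be extended to a càdlàg function from [0, A] to ℝ if and only if the following two conditions hold: (1) for all x ∈ D ∩ [0, A), f(y) tends to f(x) as y ∈ D tends to x from above; (2) for all ε > 0 there exists δ > 0 such that for all x, y, z ∈ D with x ≤ y ≤ z ≤ x + δ one has min(|f(y) − f(x)|, |f(y) − f(z)|) ≤ ε. Moreover, if these conditions hold, the càdlàg extension of f is unique. -/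
open Filter Set

/-- `g` is a càdlàg extension of `f : D → ℝ` to `[0, A]`: it agrees with `f` on `D`, is
right-continuous (within `[0, A]`) at every point of `[0, A)`, and has finite left limits
(within `[0, A]`) at every point of `(0, A]`. -/
def IsCadlagExtension (A : ℝ) (D : Set ℝ) (f g : ℝ → ℝ) : Prop :=
  Set.EqOn g f D ∧
  (∀ x ∈ Set.Ico 0 A, Tendsto g (nhdsWithin x (Set.Ioc x A)) (nhds (g x))) ∧
  ∀ x ∈ Set.Ioc 0 A, ∃ l : ℝ, Tendsto g (nhdsWithin x (Set.Ico 0 x)) (nhds l)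

/-- The two conditions of the lemma: (1) at every point `x` of `D ∩ [0, A)`, `f y → f x`
as `y ∈ D` tends to `x` from above; (2) the oscillation condition: for every `ε > 0`
there is `δ > 0` such that for `x ≤ y ≤ z ≤ x + δ` in `D`,
`min |f y - f x| |f y - f z| ≤ ε`. -/
def CadlagExtendable (A : ℝ) (D : Set ℝ) (f : ℝ → ℝ) : Prop :=
  (∀ x ∈ D, x < A → Tendsto f (nhdsWithin x (D ∩ Set.Ioi x)) (nhds (f x))) ∧
  ∀ ε : ℝ, 0 < ε → ∃ δ : ℝ, 0 < δ ∧ ∀ x ∈ D, ∀ y ∈ D, ∀ z ∈ D,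
    x ≤ y → y ≤ z → z ≤ x + δ → min |f y - f x| |f y - f z| ≤ ε


section CadlagAux
variable {A : ℝ} {D : Set ℝ} {f : ℝ → ℝ}

lemma cadlag_nebot_right (hdense : Icc 0 A ⊆ closure D) {x : ℝ} (hx : x ∈ Ico 0 A) :
    (nhdsWithin x (D ∩ Ioi x)).NeBot := by
  rw [← mem_closure_iff_nhdsWithin_neBot, Metric.mem_closure_iff]
  intro ε hε
  set m := min (ε / 2) ((A - x) / 2) with hm
  have hm0 : 0 < m := lt_min (by linarith) (by linarith [hx.2])
  have hyA : x + m ≤ A := by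
    have : m ≤ (A - x) / 2 := min_le_right _ _
    linarith [hx.2]
  have hy0 : (0:ℝ) ≤ x + m := by linarith [hx.1]
  obtain ⟨d, hdD, hdy⟩ := Metric.mem_closure_iff.mp (hdense ⟨hy0, hyA⟩) m hm0
  rw [Real.dist_eq] at hdy
  refine ⟨d, ⟨hdD, ?_⟩, ?_⟩
  · have := abs_lt.mp hdy
    simp only [mem_Ioi]; linarith [this.1, this.2]
  · rw [Real.dist_eq]
    have := abs_lt.mp hdy
    have hme : m ≤ ε / 2 := min_le_left _ _
    rw [abs_lt]; constructor <;> linarith [this.1, this.2]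

lemma cadlag_nebot_left (hdense : Icc 0 A ⊆ closure D) {x : ℝ} (hx : x ∈ Ioc 0 A) :
    (nhdsWithin x (D ∩ Iio x)).NeBot := by
  rw [← mem_closure_iff_nhdsWithin_neBot, Metric.mem_closure_iff]
  intro ε hε
  set m := min (ε / 2) (x / 2) with hm
  have hm0 : 0 < m := lt_min (by linarith) (by linarith [hx.1])
  have hy0 : (0:ℝ) ≤ x - m := by
    have : m ≤ x / 2 := min_le_right _ _
    linarith [hx.1]
  have hyA : x - m ≤ A := by linarith [hx.2]
  obtain ⟨d, hdD, hdy⟩ := Metric.mem_closure_iff.mp (hdense ⟨hy0, hyA⟩) m hm0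
  rw [Real.dist_eq] at hdy
  refine ⟨d, ⟨hdD, ?_⟩, ?_⟩
  · have := abs_lt.mp hdy
    simp only [mem_Iio]; linarith [this.1, this.2]
  · rw [Real.dist_eq]
    have := abs_lt.mp hdy
    have hme : m ≤ ε / 2 := min_le_left _ _
    rw [abs_lt]; constructor <;> linarith [this.1, this.2]

end CadlagAux


section CadlagAux
variable {A : ℝ} {D : Set ℝ} {f : ℝ → ℝ}

lemma cadlag_osc_right
    (hcond : ∀ ε : ℝ, 0 < ε → ∃ δ : ℝ, 0 < δ ∧ ∀ x ∈ D, ∀ y ∈ D, ∀ z ∈ D,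
      x ≤ y → y ≤ z → z ≤ x + δ → min |f y - f x| |f y - f z| ≤ ε)
    {ε : ℝ} (hε : 0 < ε) {x : ℝ} (hx : x ∈ Ico 0 A) :
    ∃ t, x < t ∧ t ≤ A ∧ ∀ u ∈ D ∩ Ioc x t, ∀ v ∈ D ∩ Ioc x t, |f u - f v| ≤ 3 * ε := by
  obtain ⟨δ, hδ, hcon⟩ := hcond ε hε
  by_contra h
  push_neg at h
  have pick : ∀ t, x < t → t ≤ A →
      ∃ u ∈ D ∩ Ioc x t, ∃ v ∈ D ∩ Ioc x t, u ≤ v ∧ 3 * ε < |f u - f v| := by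
    intro t h1 h2
    obtain ⟨u, hu, v, hv, huv⟩ := h t h1 h2
    rcases le_total u v with h' | h'
    · exact ⟨u, hu, v, hv, h', huv⟩
    · exact ⟨v, hv, u, hu, h', by rwa [abs_sub_comm]⟩
  obtain ⟨u1, hu1, v1, hv1, h12, hbig1⟩ :=
    pick (min (x + δ) A) (lt_min (by linarith) hx.2) (min_le_right _ _)
  have hxu1 : x < u1 := hu1.2.1
  have hu1A : u1 ≤ A := le_trans hu1.2.2 (min_le_right _ _)
  obtain ⟨u2, hu2, v2, hv2, h34, hbig2⟩ :=
    pick ((x + u1) / 2) (by linarith) (by linarith)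
  have hord : v2 < u1 := lt_of_le_of_lt hv2.2.2 (by linarith)
  have hbd : ∀ w : ℝ, w ∈ Ioc x (min (x + δ) A) → w ≤ x + δ :=
    fun w hw => le_trans hw.2 (min_le_left _ _)
  have hxu2 : x < u2 := hu2.2.1
  have e1 : |f v2 - f u1| ≤ ε := by
    have H := hcon u2 hu2.1 v2 hv2.1 u1 hu1.1 h34 hord.le
      (by linarith [hbd u1 hu1.2])
    have hgt : ε < |f v2 - f u2| := by rw [abs_sub_comm]; linarith
    rcases min_le_iff.mp H with h' | h'
    · linarith
    · exact h'
  have e2 : |f v2 - f v1| ≤ ε := by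
    have hv2v1 : v2 ≤ v1 := le_trans hord.le h12
    have H := hcon u2 hu2.1 v2 hv2.1 v1 hv1.1 h34 hv2v1
      (by linarith [hbd v1 hv1.2])
    have hgt : ε < |f v2 - f u2| := by rw [abs_sub_comm]; linarith
    rcases min_le_iff.mp H with h' | h'
    · linarith
    · exact h'
  have : |f u1 - f v1| ≤ 2 * ε := by
    calc |f u1 - f v1| ≤ |f u1 - f v2| + |f v2 - f v1| := abs_sub_le _ _ _
      _ ≤ ε + ε := by rw [abs_sub_comm]; exact add_le_add e1 e2
      _ = 2 * ε := by ring
  linarith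

lemma cadlag_osc_left
    (hcond : ∀ ε : ℝ, 0 < ε → ∃ δ : ℝ, 0 < δ ∧ ∀ x ∈ D, ∀ y ∈ D, ∀ z ∈ D,
      x ≤ y → y ≤ z → z ≤ x + δ → min |f y - f x| |f y - f z| ≤ ε)
    {ε : ℝ} (hε : 0 < ε) {x : ℝ} (hx : x ∈ Ioc 0 A) :
    ∃ t, 0 ≤ t ∧ t < x ∧ ∀ u ∈ D ∩ Ioo t x, ∀ v ∈ D ∩ Ioo t x, |f u - f v| ≤ 3 * ε := by
  obtain ⟨δ, hδ, hcon⟩ := hcond ε hε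
  by_contra h
  push_neg at h
  have pick : ∀ t, 0 ≤ t → t < x →
      ∃ u ∈ D ∩ Ioo t x, ∃ v ∈ D ∩ Ioo t x, u ≤ v ∧ 3 * ε < |f u - f v| := by
    intro t h1 h2
    obtain ⟨u, hu, v, hv, huv⟩ := h t h1 h2
    rcases le_total u v with h' | h'
    · exact ⟨u, hu, v, hv, h', huv⟩
    · exact ⟨v, hv, u, hu, h', by rwa [abs_sub_comm]⟩
  obtain ⟨u1, hu1, v1, hv1, h12, hbig1⟩ :=
    pick (max (x - δ) 0) (le_max_right _ _) (max_lt (by linarith) hx.1)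
  have htu1 : max (x - δ) 0 < u1 := hu1.2.1
  have hxδ : x - δ ≤ max (x - δ) 0 := le_max_left _ _
  have hv1x : v1 < x := hv1.2.2
  obtain ⟨u2, hu2, v2, hv2, h34, hbig2⟩ :=
    pick ((v1 + x) / 2) (by linarith [le_max_right (x - δ) 0, htu1.trans_le h12, hx.1]) (by linarith)
  have hord : v1 < u2 := lt_of_lt_of_le (by linarith [hu2.2.1]) le_rfl
  have e1 : |f v1 - f u2| ≤ ε := by
    have H := hcon u1 hu1.1 v1 hv1.1 u2 hu2.1 h12 hord.le
      (by linarith [hu2.2.2])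
    have hgt : ε < |f v1 - f u1| := by rw [abs_sub_comm]; linarith
    rcases min_le_iff.mp H with h' | h'
    · linarith
    · exact h'
  have e2 : |f v1 - f v2| ≤ ε := by
    have hvv : v1 ≤ v2 := le_trans hord.le h34
    have H := hcon u1 hu1.1 v1 hv1.1 v2 hv2.1 h12 hvv
      (by linarith [hv2.2.2])
    have hgt : ε < |f v1 - f u1| := by rw [abs_sub_comm]; linarith
    rcases min_le_iff.mp H with h' | h'
    · linarith
    · exact h'
  have : |f u2 - f v2| ≤ 2 * ε := by
    calc |f u2 - f v2| ≤ |f u2 - f v1| + |f v1 - f v2| := abs_sub_le _ _ _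
      _ ≤ ε + ε := by rw [abs_sub_comm]; exact add_le_add e1 e2
      _ = 2 * ε := by ring
  linarith

end CadlagAux


section CadlagAux
variable {A : ℝ} {D : Set ℝ} {f : ℝ → ℝ}

lemma cadlag_abs_limit_le {F : Filter ℝ} [F.NeBot] {f : ℝ → ℝ} {L c ε : ℝ}
    (h : Tendsto f F (nhds L)) (he : ∀ᶠ s in F, |f s - c| ≤ ε) : |L - c| ≤ ε :=
  le_of_tendsto ((h.sub_const c).abs) he

lemma cadlag_exists_rlim (hdense : Icc 0 A ⊆ closure D)
    {x : ℝ} (hx : x ∈ Ico 0 A)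
    (hosc : ∀ ε : ℝ, 0 < ε → ∃ t, x < t ∧ t ≤ A ∧
      ∀ u ∈ D ∩ Ioc x t, ∀ v ∈ D ∩ Ioc x t, |f u - f v| ≤ 3 * ε) :
    ∃ l, Tendsto f (nhdsWithin x (D ∩ Ioi x)) (nhds l) := by
  haveI := cadlag_nebot_right hdense hx
  have hc : Cauchy (map f (nhdsWithin x (D ∩ Ioi x))) := by
    rw [Metric.cauchy_iff]
    refine ⟨Filter.NeBot.map inferInstance f, ?_⟩
    intro ε hε
    obtain ⟨t, hxt, htA, ho⟩ := hosc (ε / 4) (by linarith)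
    refine ⟨f '' (D ∩ Ioc x t), ?_, ?_⟩
    · rw [mem_map]
      have h1 : ∀ᶠ s in nhdsWithin x (D ∩ Ioi x), s ∈ D ∩ Ioc x t := by
        filter_upwards [self_mem_nhdsWithin,
          eventually_nhdsWithin_of_eventually_nhds (Filter.Tendsto.eventually_lt_const hxt tendsto_id)]
          with s hs hst
        exact ⟨hs.1, hs.2, hst.le⟩
      exact h1.mono fun s hs => mem_image_of_mem f hs
    · rintro a ⟨ua, hua, rfl⟩ b ⟨ub, hub, rfl⟩
      rw [Real.dist_eq]
      calc |f ua - f ub| ≤ 3 * (ε / 4) := ho ua hua ub hub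
        _ < ε := by linarith
  obtain ⟨l, hl⟩ := CompleteSpace.complete hc
  exact ⟨l, hl⟩

lemma cadlag_exists_llim (hdense : Icc 0 A ⊆ closure D)
    {x : ℝ} (hx : x ∈ Ioc 0 A)
    (hosc : ∀ ε : ℝ, 0 < ε → ∃ t, 0 ≤ t ∧ t < x ∧
      ∀ u ∈ D ∩ Ioo t x, ∀ v ∈ D ∩ Ioo t x, |f u - f v| ≤ 3 * ε) :
    ∃ l, Tendsto f (nhdsWithin x (D ∩ Iio x)) (nhds l) := by
  haveI := cadlag_nebot_left hdense hx
  have hc : Cauchy (map f (nhdsWithin x (D ∩ Iio x))) := by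
    rw [Metric.cauchy_iff]
    refine ⟨Filter.NeBot.map inferInstance f, ?_⟩
    intro ε hε
    obtain ⟨t, ht0, htx, ho⟩ := hosc (ε / 4) (by linarith)
    refine ⟨f '' (D ∩ Ioo t x), ?_, ?_⟩
    · rw [mem_map]
      have h1 : ∀ᶠ s in nhdsWithin x (D ∩ Iio x), s ∈ D ∩ Ioo t x := by
        filter_upwards [self_mem_nhdsWithin,
          eventually_nhdsWithin_of_eventually_nhds (Filter.Tendsto.eventually_const_lt htx tendsto_id)]
          with s hs hst
        exact ⟨hs.1, hst, hs.2⟩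
      exact h1.mono fun s hs => mem_image_of_mem f hs
    · rintro a ⟨ua, hua, rfl⟩ b ⟨ub, hub, rfl⟩
      rw [Real.dist_eq]
      calc |f ua - f ub| ≤ 3 * (ε / 4) := ho ua hua ub hub
        _ < ε := by linarith
  obtain ⟨l, hl⟩ := CompleteSpace.complete hc
  exact ⟨l, hl⟩

end CadlagAux

section CadlagAux2
variable {A : ℝ} {D : Set ℝ} {f : ℝ → ℝ}

lemma cadlag_main_exists (hA : 0 < A) (hD : D ⊆ Icc 0 A)
    (hdense : Icc 0 A ⊆ closure D) (hAD : A ∈ D)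
    (hcond : CadlagExtendable A D f) :
    ∃ g : ℝ → ℝ, IsCadlagExtension A D f g := by
  obtain ⟨h1, h2⟩ := hcond
  have hex : ∀ x : ℝ, ∃ l, x ∈ Ico 0 A → Tendsto f (nhdsWithin x (D ∩ Ioi x)) (nhds l) := by
    intro x
    by_cases hx : x ∈ Ico 0 A
    · obtain ⟨l, hl⟩ := cadlag_exists_rlim hdense hx
        (fun ε hε => cadlag_osc_right h2 hε hx)
      exact ⟨l, fun _ => hl⟩
    · exact ⟨0, fun h => absurd h hx⟩
  choose g0 hg0 using hex
  set G : ℝ → ℝ := fun x => if x = A then f A else g0 x with hG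
  have hGA : G A = f A := by simp [hG]
  have hg : ∀ x, x ∈ Ico 0 A → Tendsto f (nhdsWithin x (D ∩ Ioi x)) (nhds (G x)) := by
    intro x hx
    have hxA : x ≠ A := ne_of_lt hx.2
    simpa [hG, hxA] using hg0 x hx
  -- key estimate
  have key : ∀ x, x ∈ Ico 0 A → ∀ ε : ℝ, 0 < ε → ∃ t, x < t ∧ t ≤ A ∧
      ∀ d ∈ D ∩ Ioc x t, |f d - G x| ≤ ε := by
    intro x hx ε hε
    obtain ⟨t, hxt, htA, ho⟩ := cadlag_osc_right h2 (show (0:ℝ) < ε / 3 by linarith) hx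
    refine ⟨t, hxt, htA, fun d hd => ?_⟩
    haveI := cadlag_nebot_right hdense hx
    have hev : ∀ᶠ s in nhdsWithin x (D ∩ Ioi x), |f s - f d| ≤ ε := by
      filter_upwards [self_mem_nhdsWithin,
        eventually_nhdsWithin_of_eventually_nhds (Filter.Tendsto.eventually_lt_const hxt tendsto_id)]
        with s hs hst
      calc |f s - f d| ≤ 3 * (ε / 3) := ho s ⟨hs.1, hs.2, hst.le⟩ d hd
        _ = ε := by ring
    have := cadlag_abs_limit_le (hg x hx) hev
    rwa [abs_sub_comm]
  -- EqOn
  have heq : Set.EqOn G f D := by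
    intro d hdD
    by_cases hd : d = A
    · simp [hG, hd]
    · have hdI : d ∈ Ico 0 A := ⟨(hD hdD).1, lt_of_le_of_ne (hD hdD).2 hd⟩
      haveI := cadlag_nebot_right hdense hdI
      exact tendsto_nhds_unique (hg d hdI) (h1 d hdD hdI.2)
  refine ⟨G, heq, ?_, ?_⟩
  · -- right continuity
    intro x hx
    rw [Metric.tendsto_nhdsWithin_nhds]
    intro ε hε
    obtain ⟨t, hxt, htA, hkey⟩ := key x hx (ε / 2) (by linarith)
    refine ⟨t - x, by linarith, ?_⟩
    intro y hy hdist
    rw [Real.dist_eq] at hdist ⊢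
    have hyx : x < y := hy.1
    have hyt : y < t := by
      have := abs_lt.mp hdist
      linarith [this.1, this.2]
    have hyI : y ∈ Ico 0 A := ⟨le_of_lt (lt_of_le_of_lt hx.1 hyx), lt_of_lt_of_le hyt htA⟩
    haveI := cadlag_nebot_right hdense hyI
    have hev : ∀ᶠ s in nhdsWithin y (D ∩ Ioi y), |f s - G x| ≤ ε / 2 := by
      filter_upwards [self_mem_nhdsWithin,
        eventually_nhdsWithin_of_eventually_nhds (Filter.Tendsto.eventually_lt_const hyt tendsto_id)]
        with s hs hst
      exact hkey s ⟨hs.1, lt_trans hyx hs.2, hst.le⟩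
    have := cadlag_abs_limit_le (hg y hyI) hev
    linarith
  · -- left limits
    intro x hx
    obtain ⟨l, hl⟩ := cadlag_exists_llim hdense hx
      (fun ε hε => cadlag_osc_left h2 hε hx)
    refine ⟨l, ?_⟩
    rw [Metric.tendsto_nhdsWithin_nhds]
    intro ε hε
    obtain ⟨t, ht0, htx, ho⟩ := cadlag_osc_left h2 (show (0:ℝ) < ε / 6 by linarith) hx
    haveI := cadlag_nebot_left hdense hx
    have hfl : ∀ d ∈ D ∩ Ioo t x, |f d - l| ≤ ε / 2 := by
      intro d hd
      have hev : ∀ᶠ s in nhdsWithin x (D ∩ Iio x), |f s - f d| ≤ ε / 2 := by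
        filter_upwards [self_mem_nhdsWithin,
          eventually_nhdsWithin_of_eventually_nhds (Filter.Tendsto.eventually_const_lt htx tendsto_id)]
          with s hs hst
        calc |f s - f d| ≤ 3 * (ε / 6) := ho s ⟨hs.1, hst, hs.2⟩ d hd
          _ = ε / 2 := by ring
      have := cadlag_abs_limit_le hl hev
      rw [abs_sub_comm]
      exact this
    refine ⟨x - t, by linarith, ?_⟩
    intro y hy hdist
    rw [Real.dist_eq] at hdist ⊢
    have hyx : y < x := hy.2
    have hty : t < y := by
      have := abs_lt.mp hdist
      linarith [this.1, this.2]
    by_cases hyA : y = A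
    · exact absurd (hyA ▸ hyx) (not_lt.mpr hx.2)
    · have hyI : y ∈ Ico 0 A := ⟨hy.1, lt_of_le_of_ne (le_trans hyx.le hx.2) hyA⟩
      haveI := cadlag_nebot_right hdense hyI
      have hev : ∀ᶠ s in nhdsWithin y (D ∩ Ioi y), |f s - l| ≤ ε / 2 := by
        filter_upwards [self_mem_nhdsWithin,
          eventually_nhdsWithin_of_eventually_nhds (Filter.Tendsto.eventually_lt_const hyx tendsto_id)]
          with s hs hst
        exact hfl s ⟨hs.1, lt_trans hty hs.2, hst⟩
      have := cadlag_abs_limit_le (hg y hyI) hev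
      linarith

end CadlagAux2

section CadlagAux3
variable {A : ℝ} {D : Set ℝ} {f : ℝ → ℝ}

lemma cadlag_main_nec (hA : 0 < A) (hD : D ⊆ Icc 0 A)
    (hdense : Icc 0 A ⊆ closure D) (hAD : A ∈ D)
    {g : ℝ → ℝ} (hg : IsCadlagExtension A D f g) : CadlagExtendable A D f := by
  obtain ⟨heq, hrc, hll⟩ := hg
  constructor
  · intro x hxD hxA
    have hxI : x ∈ Ico 0 A := ⟨(hD hxD).1, hxA⟩
    have hsub : D ∩ Ioi x ⊆ Ioc x A := fun d hd => ⟨hd.2, (hD hd.1).2⟩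
    have h1 : Tendsto g (nhdsWithin x (D ∩ Ioi x)) (nhds (g x)) :=
      (hrc x hxI).mono_left (nhdsWithin_mono x hsub)
    have hev : g =ᶠ[nhdsWithin x (D ∩ Ioi x)] f :=
      eventually_nhdsWithin_of_forall (fun s hs => heq hs.1)
    have h2 : Tendsto f (nhdsWithin x (D ∩ Ioi x)) (nhds (g x)) := h1.congr' hev
    rwa [heq hxD] at h2
  · intro ε hε
    have key : ∀ t : ℝ, t ∈ Icc 0 A → ∃ u v l r : ℝ, u < t ∧ t < v ∧
        (∀ s, u < s → s < t → s ∈ Icc 0 A → |g s - l| ≤ ε / 2) ∧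
        (∀ s, t ≤ s → s < v → s ∈ Icc 0 A → |g s - r| ≤ ε / 2) := by
      intro t ht
      have hright : ∃ v, t < v ∧ ∀ s, t ≤ s → s < v → s ∈ Icc 0 A → |g s - g t| ≤ ε / 2 := by
        rcases eq_or_lt_of_le ht.2 with htA | htA
        · refine ⟨A + 1, by linarith [ht.2], fun s h1 h2 h3 => ?_⟩
          have : s = t := le_antisymm (htA ▸ h3.2) h1
          simp [this]; linarith
        · have := hrc t ⟨ht.1, htA⟩
          rw [Metric.tendsto_nhdsWithin_nhds] at this
          obtain ⟨δ, hδ, hδ'⟩ := this (ε / 2) (by linarith)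
          refine ⟨t + δ, by linarith, fun s h1 h2 h3 => ?_⟩
          rcases eq_or_lt_of_le h1 with h1' | h1'
          · simp [← h1']; linarith
          · have := hδ' (x := s) ⟨h1', h3.2⟩ (by rw [Real.dist_eq, abs_lt]; constructor <;> linarith)
            rw [Real.dist_eq] at this
            linarith
      obtain ⟨v, hv, hr⟩ := hright
      have hleft : ∃ u l, u < t ∧ ∀ s, u < s → s < t → s ∈ Icc 0 A → |g s - l| ≤ ε / 2 := by
        rcases eq_or_lt_of_le ht.1 with ht0 | ht0
        · exact ⟨-1, 0, by linarith, fun s h1 h2 h3 => absurd (lt_of_lt_of_le h2 (le_of_eq ht0.symm)) (not_lt.mpr h3.1)⟩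
        · obtain ⟨l, hl⟩ := hll t ⟨ht0, ht.2⟩
          rw [Metric.tendsto_nhdsWithin_nhds] at hl
          obtain ⟨δ, hδ, hδ'⟩ := hl (ε / 2) (by linarith)
          refine ⟨t - δ, l, by linarith, fun s h1 h2 h3 => ?_⟩
          have := hδ' (x := s) ⟨h3.1, h2⟩ (by rw [Real.dist_eq, abs_lt]; constructor <;> linarith)
          rw [Real.dist_eq] at this
          linarith
      obtain ⟨u, l, hu, hls⟩ := hleft
      exact ⟨u, v, l, g t, hu, hv, hls, hr⟩
    choose! u v l r hu hv hls hrs using key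
    have hcov : Icc 0 A ⊆ ⋃ t : Icc (0:ℝ) A, Ioo (u t) (v t) :=
      fun s hs => mem_iUnion.mpr ⟨⟨s, hs⟩, mem_Ioo.mpr ⟨hu s hs, hv s hs⟩⟩
    obtain ⟨δ, hδ, hball⟩ := lebesgue_number_lemma_of_metric isCompact_Icc
      (fun i => isOpen_Ioo) hcov
    refine ⟨δ / 2, by linarith, ?_⟩
    intro x hx y hy z hz hxy hyz hzx
    obtain ⟨⟨t, htI⟩, hsub⟩ := hball y (hD hy)
    have hxb : x ∈ Ioo (u t) (v t) := hsub (by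
      rw [Metric.mem_ball, Real.dist_eq, abs_lt]; constructor <;> linarith)
    have hyb : y ∈ Ioo (u t) (v t) := hsub (Metric.mem_ball_self hδ)
    have hzb : z ∈ Ioo (u t) (v t) := hsub (by
      rw [Metric.mem_ball, Real.dist_eq, abs_lt]; constructor <;> linarith)
    rcases lt_or_ge y t with hlt | hle
    · have h1 := hls t htI x hxb.1 (lt_of_le_of_lt hxy hlt) (hD hx)
      have h2 := hls t htI y hyb.1 hlt (hD hy)
      have : |f y - f x| ≤ ε := by
        rw [← heq hx, ← heq hy]
        calc |g y - g x| ≤ |g y - l t| + |l t - g x| := abs_sub_le _ _ _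
          _ ≤ ε / 2 + ε / 2 := add_le_add h2 (by rwa [abs_sub_comm])
          _ = ε := by ring
      exact le_trans (min_le_left _ _) this
    · have h1 := hrs t htI y hle hyb.2 (hD hy)
      have h2 := hrs t htI z (le_trans hle hyz) hzb.2 (hD hz)
      have : |f y - f z| ≤ ε := by
        rw [← heq hy, ← heq hz]
        calc |g y - g z| ≤ |g y - r t| + |r t - g z| := abs_sub_le _ _ _
          _ ≤ ε / 2 + ε / 2 := add_le_add h1 (by rwa [abs_sub_comm])
          _ = ε := by ring
      exact le_trans (min_le_right _ _) this

lemma cadlag_unique (hA : 0 < A) (hD : D ⊆ Icc 0 A)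
    (hdense : Icc 0 A ⊆ closure D) (hAD : A ∈ D)
    {g₁ g₂ : ℝ → ℝ} (h1 : IsCadlagExtension A D f g₁) (h2 : IsCadlagExtension A D f g₂) :
    Set.EqOn g₁ g₂ (Icc 0 A) := by
  intro x hx
  by_cases hxA : x = A
  · rw [hxA, h1.1 hAD, h2.1 hAD]
  · have hxI : x ∈ Ico 0 A := ⟨hx.1, lt_of_le_of_ne hx.2 hxA⟩
    haveI := cadlag_nebot_right hdense hxI
    have hsub : D ∩ Ioi x ⊆ Ioc x A := fun d hd => ⟨hd.2, (hD hd.1).2⟩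
    have hev1 : g₁ =ᶠ[nhdsWithin x (D ∩ Ioi x)] f :=
      eventually_nhdsWithin_of_forall (fun s hs => h1.1 hs.1)
    have hev2 : g₂ =ᶠ[nhdsWithin x (D ∩ Ioi x)] f :=
      eventually_nhdsWithin_of_forall (fun s hs => h2.1 hs.1)
    have t1 : Tendsto f (nhdsWithin x (D ∩ Ioi x)) (nhds (g₁ x)) :=
      (((h1.2.1) x hxI).mono_left (nhdsWithin_mono x hsub)).congr' hev1
    have t2 : Tendsto f (nhdsWithin x (D ∩ Ioi x)) (nhds (g₂ x)) :=
      (((h2.2.1) x hxI).mono_left (nhdsWithin_mono x hsub)).congr' hev2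
    exact tendsto_nhds_unique t1 t2

end CadlagAux3


/-- A function defined on a dense subset `D` of `[0, A]` containing `A` extends to a
càdlàg function on `[0, A]` iff the two conditions of `CadlagExtendable` hold; in that
case the extension is unique. -/
theorem cadlag_extension_iff (A : ℝ) (hA : 0 < A) (D : Set ℝ)
    (hD : D ⊆ Set.Icc 0 A) (hdense : Set.Icc 0 A ⊆ closure D) (hAD : A ∈ D)
    (f : ℝ → ℝ) :
    ((∃ g : ℝ → ℝ, IsCadlagExtension A D f g) ↔ CadlagExtendable A D f) ∧
    (CadlagExtendable A D f →
      ∀ g₁ g₂ : ℝ → ℝ, IsCadlagExtension A D f g₁ → IsCadlagExtension A D f g₂ →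
        Set.EqOn g₁ g₂ (Set.Icc 0 A)) := by
  exact ⟨⟨fun ⟨g, hg⟩ => cadlag_main_nec hA hD hdense hAD hg,
    fun h => cadlag_main_exists hA hD hdense hAD h⟩,
    fun _ g₁ g₂ h1 h2 => cadlag_unique hA hD hdense hAD h1 h2⟩
end

section
/- Let Ω = C(ℝ_+, ℝ^d) be the space of continuous functions from ℝ_+ to ℝ^d for some d ≥ 1, let (F_t)_{t≥0} be the natural filtration of the canonical (coordinate) process Y (i.e. F_t = σ(Y_s, 0 ≤ s ≤ t)), and let F = σ(⋃_{t≥0} F_t). Then the filtered measurable space (Ω, F, (F_t)_{t≥0}) satisfies property (P). -/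
open MeasureTheory Set Filter
open scoped NNReal ENNReal

variable {Ω : Type*}

/-- The atom of a σ-algebra `m` at a point `x`: the intersection of all `m`-measurable
sets containing `x`. -/
def atomOf (m : MeasurableSpace Ω) (x : Ω) : Set Ω :=
  ⋂₀ {B : Set Ω | MeasurableSet[m] B ∧ x ∈ B}

/-- Property (P) for a filtered measurable space `(Ω, σ(⋃ t, 𝓕 t), (𝓕 t))`:
(1) each `𝓕 t` is countably generated; (2) each `𝓕 t` is the σ-algebra of inverse
images of Borel sets under a surjection `π t` onto a Polish space, whose fibers are
contained in the atoms of `𝓕 t`; (3) every sequence of atoms `A n (ω n)` of `𝓕 n` with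
all finite intersections nonempty has nonempty intersection. -/
def PropertyP (𝓕 : ℝ≥0 → MeasurableSpace Ω) : Prop :=
  (∀ t : ℝ≥0, ∃ S : Set (Set Ω), S.Countable ∧ 𝓕 t = MeasurableSpace.generateFrom S) ∧
  (∀ t : ℝ≥0, ∃ (Ωt : Type) (τ : TopologicalSpace Ωt) (_ : @PolishSpace Ωt τ)
      (π : Ω → Ωt), Function.Surjective π ∧
      𝓕 t = MeasurableSpace.comap π (@borel Ωt τ) ∧
      ∀ B : Set Ω, MeasurableSet[𝓕 t] B → ∀ ω : Ω, π ω ∈ π '' B → ω ∈ B) ∧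
  ∀ ω : ℕ → Ω,
    (∀ N : ℕ, (⋂ n ∈ Finset.range (N + 1), atomOf (𝓕 (n : ℝ≥0)) (ω n)).Nonempty) →
    (⋂ n : ℕ, atomOf (𝓕 (n : ℝ≥0)) (ω n)).Nonempty

/-! The natural σ-algebra `𝓕 t` is the pullback, under restriction to `[0, t]`, of the Borel
σ-algebra of the Polish space `C([0, t], ℝ^d)`: for a compact separable `K`, a closed ball of
`C(K, E)` is the countable intersection of the cylinders `{f | f x ∈ closedBall (g x) r}` over a
dense sequence of points `x`, so the Borel σ-algebra is generated by the evaluations.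
Conditions (1) and (2) follow at once, and the atom of `𝓕 t` at `ω` is the set of paths that
agree with `ω` on `[0, t]`. If finitely many such atoms always meet, the paths `ω n` agree with
each other on their common intervals, and so glue to a single continuous path lying in all the
atoms. -/

open Metric TopologicalSpace

theorem ContinuousMap.closedBall_eq_biInter_preimage {K E : Type*} [TopologicalSpace K]
    [CompactSpace K] [PseudoMetricSpace E] {D : Set K} (hD : Dense D) (g : C(K, E)) {r : ℝ}
    (hr : 0 ≤ r) :
    closedBall g r = ⋂ x ∈ D, (fun f : C(K, E) => f x) ⁻¹' closedBall (g x) r := by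
  ext f
  simp only [Metric.mem_closedBall, mem_iInter, mem_preimage, ContinuousMap.dist_le hr]
  exact ⟨fun hf x _ => hf x, fun hf => hD.induction hf
    (isClosed_le (f.continuous.dist g.continuous) continuous_const)⟩

theorem Metric.isTopologicalBasis_balls (α : Type*) [PseudoMetricSpace α] :
    IsTopologicalBasis {s : Set α | ∃ x r, s = ball x r} := by
  refine isTopologicalBasis_of_isOpen_of_nhds
    (by rintro _ ⟨x, r, rfl⟩; exact isOpen_ball) fun x u hxu hu => ?_
  obtain ⟨ε, hε, hsub⟩ := isOpen_iff.1 hu x hxu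
  exact ⟨_, ⟨x, ε, rfl⟩, mem_ball_self hε, hsub⟩

theorem ContinuousMap.borel_eq_iSup_comap_eval {K E : Type*} [TopologicalSpace K]
    [CompactSpace K] [SeparableSpace K] [PseudoMetricSpace E] [MeasurableSpace E] [BorelSpace E]
    [SecondCountableTopology C(K, E)] :
    borel C(K, E) = ⨆ x : K, MeasurableSpace.comap (fun f : C(K, E) => f x) ‹_› := by
  set M := ⨆ x : K, MeasurableSpace.comap (fun f : C(K, E) => f x) ‹MeasurableSpace E›
  refine le_antisymm ?_ (iSup_le fun x => ?_)
  · obtain ⟨D, hDc, hD⟩ := exists_countable_dense K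
    have heval (x : K) : Measurable[M] (fun f : C(K, E) => f x) := measurable_iff_comap_le.2 <|
      le_iSup (fun y : K => MeasurableSpace.comap (fun f : C(K, E) => f y) ‹_›) x
    have hdist (g : C(K, E)) : Measurable[M] (dist · g) := by
      refine measurable_of_Iic fun r => ?_
      rcases lt_or_ge r 0 with hr | hr
      · convert @MeasurableSet.empty _ M
        exact closedBall_eq_empty.2 hr
      change MeasurableSet[M] (closedBall g r)
      rw [closedBall_eq_biInter_preimage hD g hr]
      exact .biInter hDc fun x _ => heval x measurableSet_closedBall
    rw [(Metric.isTopologicalBasis_balls _).borel_eq_generateFrom]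
    refine MeasurableSpace.generateFrom_le ?_
    rintro _ ⟨g, r, rfl⟩
    exact hdist g measurableSet_Iio
  · let := borel C(K, E)
    have : BorelSpace C(K, E) := ⟨rfl⟩
    exact (continuous_eval_const x).measurable.comap_le

theorem ContinuousMap.comap_restrict_iSup_comap_eval {α E : Type*} [TopologicalSpace α]
    [TopologicalSpace E] [m : MeasurableSpace E] (s : Set α) :
    (⨆ x : s, MeasurableSpace.comap (fun g : C(s, E) => g x) m).comap (ContinuousMap.restrict s)
      = ⨆ x ∈ s, MeasurableSpace.comap (fun f : C(α, E) => f x) m := by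
  rw [MeasurableSpace.comap_iSup, iSup_subtype']
  simp_rw [MeasurableSpace.comap_comp]
  rfl

theorem ContinuousMap.restrict_Icc_surjective {α β : Type*} [LinearOrder α] [TopologicalSpace α]
    [OrderTopology α] [TopologicalSpace β] {a b : α} (h : a ≤ b) :
    Function.Surjective (ContinuousMap.restrict (Icc a b) : C(α, β) → C(Icc a b, β)) :=
  fun g => ⟨ContinuousMap.IccExtend h g, ContinuousMap.ext (IccExtend_val h g)⟩

theorem atomOf_comap_borel {α β : Type*} [TopologicalSpace β] [T1Space β] (f : α → β)
    (x : α) :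
    atomOf (MeasurableSpace.comap f (borel β)) x = f ⁻¹' {f x} := by
  borelize β
  refine subset_antisymm
    (sInter_subset_of_mem ⟨⟨{f x}, measurableSet_singleton _, rfl⟩, rfl⟩) ?_
  rintro y hy B ⟨⟨C, -, rfl⟩, hxB⟩
  simpa [mem_preimage, show f y = f x from hy] using hxB

theorem mem_of_mem_image_of_measurableSet_comap {α β : Type*} {m : MeasurableSpace β}
    {f : α → β} {B : Set α} (hB : MeasurableSet[m.comap f] B) {x : α} (hx : f x ∈ f '' B) :
    x ∈ B := by
  obtain ⟨C, -, rfl⟩ := hB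
  obtain ⟨y, hy, hyx⟩ := hx
  rwa [mem_preimage, ← hyx]

theorem ContinuousMap.exists_eqOn_Iic_of_eqOn_Iic {X : Type*} [TopologicalSpace X]
    (f : ℕ → C(ℝ≥0, X))
    (hf : ∀ n m : ℕ, n ≤ m → EqOn (f n) (f m) (Iic (n : ℝ≥0))) :
    ∃ g : C(ℝ≥0, X), ∀ n : ℕ, EqOn g (f n) (Iic (n : ℝ≥0)) := by
  have key (n : ℕ) (s : ℝ≥0) (hs : s ≤ n) : f ⌈s⌉₊ s = f n s :=
    hf _ n (Nat.ceil_le.2 hs) (Nat.le_ceil s)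
  refine ⟨⟨fun s => f ⌈s⌉₊ s, continuous_iff_continuousAt.2 fun s => ?_⟩, key⟩
  have hs : s < (⌈s⌉₊ + 1 : ℕ) := (Nat.le_ceil s).trans_lt (mod_cast Nat.lt_succ_self _)
  exact (f _).continuous.continuousAt.congr <|
    eventually_of_mem (Iio_mem_nhds hs) fun u hu => (key _ u (le_of_lt hu)).symm

theorem ContinuousMap.nonempty_iInter_eqOn_Iic {X : Type*} [TopologicalSpace X]
    (ω : ℕ → C(ℝ≥0, X))
    (hω : ∀ N : ℕ, (⋂ n ∈ Finset.range (N + 1),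
      {η : C(ℝ≥0, X) | EqOn η (ω n) (Iic (n : ℝ≥0))}).Nonempty) :
    (⋂ n : ℕ, {η : C(ℝ≥0, X) | EqOn η (ω n) (Iic (n : ℝ≥0))}).Nonempty := by
  have hcompat (n m : ℕ) (hnm : n ≤ m) : EqOn (ω n) (ω m) (Iic (n : ℝ≥0)) := by
    obtain ⟨η, hη⟩ := hω m
    simp only [mem_iInter, Finset.mem_range] at hη
    have hle : Iic (n : ℝ≥0) ⊆ Iic (m : ℝ≥0) := Iic_subset_Iic.2 (Nat.cast_le.2 hnm)
    exact (hη n (by omega)).symm.trans ((hη m (by omega)).mono hle)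
  obtain ⟨g, hg⟩ := ContinuousMap.exists_eqOn_Iic_of_eqOn_Iic ω hcompat
  exact ⟨g, mem_iInter.2 hg⟩

section NaturalFiltration

variable {E : Type*}

theorem iSup_comap_eval_Iic_eq_comap_restrict [MetricSpace E] [SecondCountableTopology E]
    [MeasurableSpace E] [BorelSpace E] (t : ℝ≥0) :
    (⨆ s ∈ Iic t, MeasurableSpace.comap (fun ω : C(ℝ≥0, E) => ω s) ‹_›)
      = (borel C(Icc (0 : ℝ≥0) t, E)).comap (ContinuousMap.restrict (Icc 0 t)) := by
  rw [ContinuousMap.borel_eq_iSup_comap_eval, ContinuousMap.comap_restrict_iSup_comap_eval,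
    show Icc (0 : ℝ≥0) t = Iic t from Icc_bot]

theorem atomOf_comap_restrict_Icc [TopologicalSpace E] [T1Space E] (t : ℝ≥0)
    (ω : C(ℝ≥0, E)) :
    atomOf ((borel C(Icc (0 : ℝ≥0) t, E)).comap (ContinuousMap.restrict (Icc 0 t))) ω
      = {ω' : C(ℝ≥0, E) | EqOn ω' ω (Iic t)} := by
  rw [atomOf_comap_borel]
  ext ω'
  simp [ContinuousMap.ext_iff, EqOn]

end NaturalFiltration

theorem continuousMapSpace_propertyP_general (d : ℕ) :
    PropertyP (Ω := C(ℝ≥0, Fin d → ℝ)) (fun t : ℝ≥0 =>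
      ⨆ s ∈ Set.Iic t, MeasurableSpace.comap
        (fun ω : C(ℝ≥0, Fin d → ℝ) => ω s)
        (inferInstance : MeasurableSpace (Fin d → ℝ))) := by
  simp only [iSup_comap_eval_Iic_eq_comap_restrict]
  refine ⟨fun t => ?_, fun t => ?_, fun ω hω => ?_⟩
  · borelize C(Icc (0 : ℝ≥0) t, Fin d → ℝ)
    exact (MeasurableSpace.CountablyGenerated.comap _).isCountablyGenerated
  · exact ⟨_, _, inferInstance, _, ContinuousMap.restrict_Icc_surjective zero_le, rfl,
      fun B hB _ => mem_of_mem_image_of_measurableSet_comap hB⟩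
  · simp only [atomOf_comap_restrict_Icc] at hω ⊢
    exact ContinuousMap.nonempty_iInter_eqOn_Iic ω hω

/-- The space `C(ℝ₊, ℝ^d)` of continuous functions, equipped with the natural filtration
`𝓕 t = σ(Y s, s ≤ t)` of the canonical process `Y s ω = ω s`, satisfies property (P). -/
theorem continuousMapSpace_propertyP (d : ℕ) (hd : 1 ≤ d) :
    PropertyP (Ω := C(ℝ≥0, Fin d → ℝ)) (fun t : ℝ≥0 =>
      ⨆ s ∈ Set.Iic t, MeasurableSpace.comap
        (fun ω : C(ℝ≥0, Fin d → ℝ) => ω s)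
        (inferInstance : MeasurableSpace (Fin d → ℝ))) :=
  continuousMapSpace_propertyP_general d
end

section
/- Let (Ω, F, (F_t)_{t≥0}, P) be a filtered probability space and (Ω, F̃, (F̃_t)_{t≥0}, P̃) its N-augmentation. If (X_t)_{t≥0} is a standard Brownian motion with respect to the filtration (F_t)_{t≥0} and P (i.e. a continuous (F_t)-adapted process with X_0 = 0 such that both (X_t)_{t≥0} and (X_t² − t)_{t≥0} are (F_t)-martingales under P), then (X_t)_{t≥0} is a standard Brownian motion with respect to (F̃_t)_{t≥0} and P̃. -/
/-!
Every set of the augmented σ-algebra `𝓕_{t+} ∨ σ(𝓝)` is a.e. equal to a set of `𝓕_{t+}`, and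
`P̃` extends `P`, so the martingale property for `(F̃_t, P̃)` reduces to the one for
`(𝓕_{t+}, P)`. The latter follows from continuity of the paths: for `B ∈ 𝓕_{s+}` and `u n ↓ s`,
`∫_B X_t = ∫_B X_{u n} → ∫_B X_s`. This applies to `X` and to `X² - t` alike.
-/

open MeasureTheory Set Filter
open scoped NNReal ENNReal

variable {Ω : Type*}

/-- `X` is a martingale with respect to the σ-algebra `F'`, the filtration `𝓕'` and the
probability measure `P'`. -/
def IsMartingale (F' : MeasurableSpace Ω) (𝓕' : ℝ≥0 → MeasurableSpace Ω)
    (P' : @Measure Ω F') (X : ℝ≥0 → Ω → ℝ) : Prop :=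
  (∀ t : ℝ≥0, Measurable[𝓕' t] (X t)) ∧ (∀ t : ℝ≥0, Integrable (X t) P') ∧
  ∀ s t : ℝ≥0, s ≤ t → (P'[X t|𝓕' s]) =ᵐ[P'] X s

/-- `X` is a standard Brownian motion with respect to `(F', 𝓕', P')`: it is a continuous
adapted process starting from `0` such that `X` and `(X t ^ 2 - t)` are martingales. -/
def IsStdBrownianMotion (F' : MeasurableSpace Ω) (𝓕' : ℝ≥0 → MeasurableSpace Ω)
    (P' : @Measure Ω F') (X : ℝ≥0 → Ω → ℝ) : Prop :=
  (∀ ω, Continuous fun t : ℝ≥0 => X t ω) ∧ (∀ ω, X 0 ω = 0) ∧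
  IsMartingale F' 𝓕' P' X ∧
  IsMartingale F' 𝓕' P' (fun t ω => X t ω ^ 2 - (t : ℝ))

open scoped Topology

theorem iInf_Ioi_le_of_forall_le {ι α : Type*} [Preorder ι] [NoMaxOrder ι] [CompleteLattice α]
    {f : ι → α} {a : α} (h : ∀ i, f i ≤ a) (i : ι) : ⨅ j ∈ Ioi i, f j ≤ a :=
  let ⟨j, hj⟩ := exists_gt i
  (iInf₂_le j hj).trans (h j)

theorem MeasurableSpace.generateFrom_setOf_measurableSet_union (m : MeasurableSpace Ω)
    (N : Set (Set Ω)) :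
    MeasurableSpace.generateFrom ({A | MeasurableSet[m] A} ∪ N) =
      m ⊔ MeasurableSpace.generateFrom N := by
  rw [← MeasurableSpace.generateFrom_sup_generateFrom,
    @MeasurableSpace.generateFrom_measurableSet _ m]

theorem NNegligible.measure_eq_zero_s17 {m0 : MeasurableSpace Ω} {𝓕 : ℝ≥0 → MeasurableSpace Ω}
    {P : Set Ω → ℝ≥0∞} {μ : Measure Ω}
    (hμ : ∀ (n : ℕ) (B : Set Ω), MeasurableSet[𝓕 n] B → P B = 0 → μ B = 0) {A : Set Ω}
    (hA : NNegligible 𝓕 P A) : μ A = 0 := by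
  obtain ⟨B, hB, hPB, hAB⟩ := hA
  exact measure_mono_null hAB (measure_iUnion_null fun n => hμ n (B n) (hB n) (hPB n))

theorem MeasurableSet.exists_measurableSet_ae_eq_of_sup_generateFrom
    {m m0 : MeasurableSpace Ω} {μ : Measure Ω} {N : Set (Set Ω)} (hN : ∀ A ∈ N, μ A = 0)
    {A : Set Ω} (hA : MeasurableSet[m ⊔ MeasurableSpace.generateFrom N] A) :
    ∃ B, MeasurableSet[m] B ∧ A =ᵐ[μ] B := by
  rw [← MeasurableSpace.generateFrom_setOf_measurableSet_union] at hA
  induction A, hA using MeasurableSpace.generateFrom_induction with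
  | hC A hA _ =>
    rcases hA with hA | hA
    · exact ⟨A, hA, .rfl⟩
    · exact ⟨∅, @MeasurableSet.empty _ m, ae_eq_empty.2 (hN A hA)⟩
  | empty => exact ⟨∅, @MeasurableSet.empty _ m, .rfl⟩
  | compl A _ ih =>
    obtain ⟨B, hB, hAB⟩ := ih
    exact ⟨Bᶜ, hB.compl, hAB.compl⟩
  | iUnion A _ ih =>
    choose B hB hAB using ih
    exact ⟨⋃ n, B n, .iUnion hB, Filter.EventuallyEq.countable_iUnion hAB⟩

section Martingale

variable {F : MeasurableSpace Ω} {𝓖 : ℝ≥0 → MeasurableSpace Ω} {P : @Measure Ω F}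
  [IsFiniteMeasure P] {X : ℝ≥0 → Ω → ℝ}

theorem IsMartingale.setIntegral_eq (h_le : ∀ t, 𝓖 t ≤ F) (hX : IsMartingale F 𝓖 P X)
    {s t : ℝ≥0} (hst : s ≤ t) {A : Set Ω} (hA : MeasurableSet[𝓖 s] A) :
    ∫ ω in A, X t ω ∂P = ∫ ω in A, X s ω ∂P :=
  (setIntegral_condExp (h_le s) (hX.2.1 t) hA).symm.trans
    (integral_congr_ae (ae_restrict_of_ae (hX.2.2 s t hst)))

theorem isMartingale_of_setIntegral_eq (h_le : ∀ t, 𝓖 t ≤ F)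
    (hmeas : ∀ t, Measurable[𝓖 t] (X t)) (hint : ∀ t, Integrable (X t) P)
    (hset : ∀ s t : ℝ≥0, s ≤ t → ∀ A, MeasurableSet[𝓖 s] A →
      ∫ ω in A, X t ω ∂P = ∫ ω in A, X s ω ∂P) :
    IsMartingale F 𝓖 P X :=
  ⟨hmeas, hint, fun s t hst =>
    (ae_eq_condExp_of_forall_setIntegral_eq (h_le s) (hint t)
      (fun _ _ _ => (hint s).integrableOn) (fun A hA _ => (hset s t hst A hA).symm)
      (hmeas s).stronglyMeasurable.aestronglyMeasurable).symm⟩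

theorem IsMartingale.setIntegral_eq_of_measurableSet_iInf_Ioi (h_le : ∀ t, 𝓖 t ≤ F)
    (hright : ∀ ω s, ContinuousWithinAt (fun t => X t ω) (Ioi s) s)
    (hX : IsMartingale F 𝓖 P X) {s t : ℝ≥0} (hst : s ≤ t) {B : Set Ω}
    (hB : MeasurableSet[⨅ u ∈ Ioi s, 𝓖 u] B) :
    ∫ ω in B, X t ω ∂P = ∫ ω in B, X s ω ∂P := by
  rcases hst.eq_or_lt with rfl | hst
  · rfl
  obtain ⟨u, -, hu, hu_lim⟩ := exists_seq_strictAnti_tendsto' hst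
  -- `X (u n) = P[X t | 𝓖 (u n)]` a.e. makes the family uniformly integrable, so the pointwise
  -- convergence to `X s` holds in `L¹`.
  have hui : UniformIntegrable (fun n => X (u n)) 1 P :=
    ((hX.2.1 t).uniformIntegrable_condExp fun n => h_le (u n)).ae_eq
      fun n => hX.2.2 (u n) t (hu n).2.le
  have hu_lim' : Tendsto u atTop (𝓝[>] s) :=
    tendsto_nhdsWithin_iff.2 ⟨hu_lim, .of_forall fun n => (hu n).1⟩
  have hL1 : Tendsto (fun n => eLpNorm (X (u n) - X s) 1 P) atTop (𝓝 0) :=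
    tendsto_Lp_finite_of_tendsto_ae le_rfl ENNReal.one_ne_top hui.1
      (memLp_one_iff_integrable.2 (hX.2.1 s)) hui.2.1
      (.of_forall fun ω => (hright ω s).tendsto.comp hu_lim')
  have hlim : Tendsto (fun n => ∫ ω in B, X (u n) ω ∂P) atTop (𝓝 (∫ ω in B, X s ω ∂P)) :=
    tendsto_setIntegral_of_L1' (X s) (hX.2.1 s).1
      (.of_forall fun n => hX.2.1 (u n)) hL1 B
  have hconst : ∀ n, ∫ ω in B, X (u n) ω ∂P = ∫ ω in B, X t ω ∂P := fun n =>
    (hX.setIntegral_eq h_le (hu n).2.le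
      ((iInf₂_le (u n) (hu n).1 : (⨅ v ∈ Ioi s, 𝓖 v) ≤ 𝓖 (u n)) B hB)).symm
  simp only [hconst] at hlim
  exact tendsto_nhds_unique tendsto_const_nhds hlim

theorem IsMartingale.iInf_Ioi (h_mono : Monotone 𝓖) (h_le : ∀ t, 𝓖 t ≤ F)
    (hright : ∀ ω s, ContinuousWithinAt (fun t => X t ω) (Ioi s) s)
    (hX : IsMartingale F 𝓖 P X) :
    IsMartingale F (fun t => ⨅ u ∈ Ioi t, 𝓖 u) P X :=
  isMartingale_of_setIntegral_eq
    (iInf_Ioi_le_of_forall_le h_le)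
    (fun t => (hX.1 t).mono (le_iInf₂ fun _ hu => h_mono (le_of_lt hu)) le_rfl) hX.2.1
    fun _ _ hst _ hB => hX.setIntegral_eq_of_measurableSet_iInf_Ioi h_le hright hst hB

end Martingale

theorem IsMartingale.sup_generateFrom_null {F : MeasurableSpace Ω}
    {𝓖 : ℝ≥0 → MeasurableSpace Ω} {N : Set (Set Ω)}
    {P : @Measure Ω (F ⊔ MeasurableSpace.generateFrom N)} [IsFiniteMeasure P]
    {X : ℝ≥0 → Ω → ℝ} (h_le : ∀ t, 𝓖 t ≤ F) (hN : ∀ A ∈ N, P A = 0)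
    (hX : IsMartingale F 𝓖 (P.trim le_sup_left) X) :
    IsMartingale (F ⊔ MeasurableSpace.generateFrom N)
      (fun t => 𝓖 t ⊔ MeasurableSpace.generateFrom N) P X := by
  have hsm : ∀ t, StronglyMeasurable[F] (X t) := fun t =>
    ((hX.1 t).mono (h_le t) le_rfl).stronglyMeasurable
  refine isMartingale_of_setIntegral_eq (fun t => sup_le_sup_right (h_le t) _)
    (fun t => (hX.1 t).mono le_sup_left le_rfl)
    (fun t => integrable_of_integrable_trim le_sup_left (hX.2.1 t)) fun s t hst A hA => ?_
  obtain ⟨B, hB, hAB⟩ := hA.exists_measurableSet_ae_eq_of_sup_generateFrom hN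
  have hBF : MeasurableSet[F] B := h_le s B hB
  calc ∫ ω in A, X t ω ∂P
      = ∫ ω in B, X t ω ∂P := setIntegral_congr_set hAB
    _ = ∫ ω in B, X t ω ∂(P.trim le_sup_left) := setIntegral_trim _ (hsm t) hBF
    _ = ∫ ω in B, X s ω ∂(P.trim le_sup_left) := hX.setIntegral_eq h_le hst hB
    _ = ∫ ω in B, X s ω ∂P := (setIntegral_trim _ (hsm s) hBF).symm
    _ = ∫ ω in A, X s ω ∂P := (setIntegral_congr_set hAB).symm

/-- A standard Brownian motion remains a standard Brownian motion under the
N-augmentation. -/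
theorem n_augmentation_brownian
    (F : MeasurableSpace Ω) (𝓕 : ℝ≥0 → MeasurableSpace Ω)
    (h_mono : Monotone 𝓕) (h_le : ∀ t, 𝓕 t ≤ F)
    (P : @Measure Ω F) (hP : @IsProbabilityMeasure Ω F P)
    (𝓝neg : Set (Set Ω)) (h𝓝 : 𝓝neg = {A | NNegligible 𝓕 (fun s => P s) A})
    (Ftil : MeasurableSpace Ω)
    (hFtil : Ftil = MeasurableSpace.generateFrom ({A | MeasurableSet[F] A} ∪ 𝓝neg))
    (𝓕til : ℝ≥0 → MeasurableSpace Ω)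
    (h𝓕til : ∀ t : ℝ≥0, 𝓕til t =
      MeasurableSpace.generateFrom
        ({A | MeasurableSet[⨅ u ∈ Set.Ioi t, 𝓕 u] A} ∪ 𝓝neg))
    (Ptil : @Measure Ω Ftil)
    (hPtil : ∀ A : Set Ω, MeasurableSet[F] A → Ptil A = P A)
    (X : ℝ≥0 → Ω → ℝ) (hX : IsStdBrownianMotion F 𝓕 P X) :
    IsStdBrownianMotion Ftil 𝓕til Ptil X := by
  obtain ⟨hcont, hzero, hmart, hmart_sq⟩ := hX
  have hFtil' : Ftil = F ⊔ MeasurableSpace.generateFrom 𝓝neg :=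
    hFtil.trans (MeasurableSpace.generateFrom_setOf_measurableSet_union F 𝓝neg)
  have h𝓕til' : 𝓕til = fun t => (⨅ u ∈ Ioi t, 𝓕 u) ⊔ MeasurableSpace.generateFrom 𝓝neg :=
    funext fun t => (h𝓕til t).trans (MeasurableSpace.generateFrom_setOf_measurableSet_union _ _)
  subst hFtil' h𝓕til'
  have hPtil_trim : Ptil.trim le_sup_left = P :=
    Measure.ext fun A hA => (trim_measurableSet_eq _ hA).trans (hPtil A hA)
  have : IsProbabilityMeasure Ptil := ⟨(hPtil univ .univ).trans hP.measure_univ⟩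
  have hnull : ∀ A ∈ 𝓝neg, Ptil A = 0 := fun A hA =>
    NNegligible.measure_eq_zero_s17 (fun n B hB hPB => (hPtil B (h_le n B hB)).trans hPB)
      (by rw [h𝓝] at hA; exact hA)
  have augment : ∀ Y : ℝ≥0 → Ω → ℝ, (∀ ω, Continuous fun t => Y t ω) →
      IsMartingale F 𝓕 P Y → IsMartingale _ _ Ptil Y := fun Y hY hYm =>
    (hPtil_trim ▸ hYm.iInf_Ioi h_mono h_le fun ω s => (hY ω).continuousWithinAt)
      |>.sup_generateFrom_null (iInf_Ioi_le_of_forall_le h_le) hnull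
  exact ⟨hcont, hzero, augment X hcont hmart, augment _ (fun ω => by fun_prop) hmart_sq⟩
end
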